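/- arXiv:1806.07847 — 5 statements merged into one kernel-verified Lean document; each statement's English description precedes it below -/
import Mathlib

section
/- Let J be the 2n×2n real matrix diag(J',...,J') with J' = [[0,1],[-1,0]]. If B ∈ U(2n) satisfies J·conj(g)·J⁻¹·B = B·conj(g) for all g ∈ U(2n), then B = cJ for some complex number c with |c|=1, and then B·conj(B) = -I ≠ I. -/
open Matrix

/-- The block-diagonal matrix `diag(J',...,J')` with `J' = [[0,1],[-1,0]]`,
realized on the index type `Fin n × Fin 2`. -/
def stdJ (n : ℕ) : Matrix (Fin n × Fin 2) (Fin n × Fin 2) ℂ :=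
  Matrix.of fun p q =>
    if p.1 = q.1 ∧ p.2 = 0 ∧ q.2 = 1 then 1
    else if p.1 = q.1 ∧ p.2 = 1 ∧ q.2 = 0 then -1 else 0

lemma stdJ_sq (n : ℕ) : stdJ n * stdJ n = -1 := by
  ext ⟨a, i⟩ ⟨b, j⟩
  rw [Matrix.mul_apply, Fintype.sum_prod_type]
  rw [Finset.sum_eq_single a]
  · rw [Fin.sum_univ_two]
    fin_cases i <;> fin_cases j <;>
      by_cases hab : a = b <;>
        simp [stdJ, hab, Matrix.neg_apply, Matrix.one_apply, Prod.ext_iff]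
  · intro c _ hc
    simp [stdJ, Ne.symm hc]
  · intro h; simp at h

lemma stdJ_map_conj (n : ℕ) : (stdJ n).map (starRingEnd ℂ) = stdJ n := by
  ext p q
  simp only [Matrix.map_apply, stdJ, Matrix.of_apply]
  split_ifs <;> simp

lemma stdJ_star (n : ℕ) : star (stdJ n) = -(stdJ n) := by
  ext p q
  simp only [Matrix.star_apply, stdJ, Matrix.of_apply, Matrix.neg_apply]
  rcases p with ⟨a, i⟩; rcases q with ⟨b, j⟩
  by_cases hab : a = b <;> fin_cases i <;> fin_cases j <;> simp [hab, eq_comm]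

lemma stdJ_inv (n : ℕ) : (stdJ n)⁻¹ = -(stdJ n) :=
  Matrix.inv_eq_right_inv (by rw [Matrix.mul_neg, stdJ_sq]; simp)

lemma comm_all_unitary_scalar {ι : Type*} [Fintype ι] [DecidableEq ι] (i0 : ι)
    (A : Matrix ι ι ℂ)
    (h : ∀ u ∈ Matrix.unitaryGroup ι ℂ, u * A = A * u) :
    A = A i0 i0 • (1 : Matrix ι ι ℂ) := by
  -- off-diagonal entries vanish
  have hoff : ∀ i j : ι, i ≠ j → A i j = 0 := by
    intro i j hij
    set d : ι → ℂ := fun k => if k = j then -1 else 1 with hd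
    have hmem : Matrix.diagonal d ∈ Matrix.unitaryGroup ι ℂ := by
      rw [Matrix.mem_unitaryGroup_iff]
      rw [Matrix.star_eq_conjTranspose, Matrix.diagonal_conjTranspose,
        Matrix.diagonal_mul_diagonal]
      ext p q
      by_cases hpq : p = q <;>
        simp [hpq, Matrix.diagonal_apply, Matrix.one_apply, d, Pi.star_apply]
      split_ifs <;> simp
    have := congrFun (congrFun (h _ hmem) i) j
    rw [Matrix.diagonal_mul, Matrix.mul_diagonal] at this
    simp only [d, if_neg hij, if_pos rfl, one_mul, mul_neg, mul_one] at this
    linear_combination this / 2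
  -- diagonal entries are equal
  have hdiag : ∀ i j : ι, A i i = A j j := by
    intro i j
    by_cases hij : i = j
    · rw [hij]
    set σ := Equiv.swap i j with hσ
    set P : Matrix ι ι ℂ := Matrix.of fun p q => if σ p = q then 1 else 0 with hP
    have hmem : P ∈ Matrix.unitaryGroup ι ℂ := by
      rw [Matrix.mem_unitaryGroup_iff]
      ext p q
      rw [Matrix.mul_apply]
      simp only [P, Matrix.star_apply, Matrix.of_apply]
      rw [Finset.sum_eq_single (σ p)]
      · by_cases hpq : p = q <;> simp [hpq, Matrix.one_apply]
        intro hc; exact hpq hc.symm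
      · intro c _ hc; simp [Ne.symm hc]
      · intro hc; simp at hc
    have := congrFun (congrFun (h _ hmem) i) (σ i)
    rw [Matrix.mul_apply, Matrix.mul_apply] at this
    rw [Finset.sum_eq_single (σ i), Finset.sum_eq_single i] at this
    · simpa [P, σ, Equiv.swap_apply_left] using this.symm
    · intro c _ hc; simp [P, σ.injective.ne hc]
    · intro hc; simp at hc
    · intro c _ hc; simp [P, Ne.symm hc]
    · intro hc; simp at hc
  ext p q
  by_cases hpq : p = q
  · subst hpq; simp [Matrix.one_apply, hdiag p i0]
  · simp [Matrix.one_apply, hpq, hoff p q hpq]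

lemma conj_mem_unitary {ι : Type*} [Fintype ι] [DecidableEq ι]
    {u : Matrix ι ι ℂ} (hu : u ∈ Matrix.unitaryGroup ι ℂ) :
    u.map (starRingEnd ℂ) ∈ Matrix.unitaryGroup ι ℂ := by
  have hu' := Matrix.mem_unitaryGroup_iff.mp hu
  rw [Matrix.mem_unitaryGroup_iff]
  ext p q
  have h0 := congrFun (congrFun hu' p) q
  rw [Matrix.mul_apply] at h0 ⊢
  have h2 : ∀ k, (u.map (starRingEnd ℂ)) p k * (star (u.map (starRingEnd ℂ))) k q
      = (starRingEnd ℂ) (u p k * (star u) k q) := by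
    intro k
    simp [Matrix.map_apply, Matrix.star_apply, mul_comm]
  rw [Finset.sum_congr rfl (fun k _ => h2 k), ← map_sum, h0]
  by_cases hpq : p = q <;> simp [Matrix.one_apply, hpq]

/-- If `B ∈ U(2n)` satisfies `J·conj(g)·J⁻¹·B = B·conj(g)` for all `g ∈ U(2n)`,
then `B = cJ` for some `c` with `|c| = 1`, and then `B·conj(B) = -1 ≠ 1`.  In particular
there is no unitary `B` intertwining as above with `B·conj(B) = 1`. -/
theorem no_involutive_extension_GLnH (n : ℕ) (hn : 0 < n)
    (B : Matrix (Fin n × Fin 2) (Fin n × Fin 2) ℂ)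
    (hB : B ∈ Matrix.unitaryGroup (Fin n × Fin 2) ℂ)
    (hint : ∀ g ∈ Matrix.unitaryGroup (Fin n × Fin 2) ℂ,
      stdJ n * g.map (starRingEnd ℂ) * (stdJ n)⁻¹ * B = B * g.map (starRingEnd ℂ)) :
    (∃ c : ℂ, ‖c‖ = 1 ∧ B = c • stdJ n) ∧
      B * B.map (starRingEnd ℂ) = -1 ∧ B * B.map (starRingEnd ℂ) ≠ 1 := by
  set i0 : Fin n × Fin 2 := (⟨0, hn⟩, 0) with hi0
  -- the matrix stdJ * B commutes with all unitaries
  have hcomm : ∀ u ∈ Matrix.unitaryGroup (Fin n × Fin 2) ℂ,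
      u * (stdJ n * B) = (stdJ n * B) * u := by
    intro u hu
    have hmapmap : (u.map (starRingEnd ℂ)).map (starRingEnd ℂ) = u := by
      ext p q; simp [Matrix.map_apply]
    have h1 := hint (u.map (starRingEnd ℂ)) (conj_mem_unitary hu)
    rw [hmapmap, stdJ_inv] at h1
    have key := congrArg (fun M => stdJ n * M) h1
    simp only [mul_neg, neg_mul, ← mul_assoc] at key ⊢
    rw [stdJ_sq] at key
    simpa using key
  set c : ℂ := -((stdJ n * B) i0 i0) with hc
  have hA := comm_all_unitary_scalar i0 (stdJ n * B) hcomm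
  have hBc : B = c • stdJ n := by
    have h2 := congrArg (fun M => stdJ n * M) hA
    simp only [← mul_assoc, Matrix.mul_smul, mul_one] at h2
    rw [stdJ_sq] at h2
    simp only [neg_mul, one_mul] at h2
    rw [hc, neg_smul, ← h2, neg_neg]
  -- |c| = 1
  have hu' := Matrix.mem_unitaryGroup_iff.mp hB
  rw [hBc, star_smul, stdJ_star, Matrix.smul_mul, Matrix.mul_smul, smul_smul,
    mul_neg, stdJ_sq, neg_neg] at hu'
  have hcc : c * star c = 1 := by
    have := congrFun (congrFun hu' i0) i0
    simpa [Matrix.smul_apply, Matrix.one_apply] using this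
  have habs : ‖c‖ = 1 := by
    have h3 : Complex.normSq c = 1 := by
      have hcc' : c * (starRingEnd ℂ) c = 1 := hcc
      have := Complex.mul_conj c
      rw [hcc'] at this
      exact_mod_cast this.symm
    have h4 := Complex.sq_norm c
    rw [h3] at h4
    nlinarith [norm_nonneg c]
  -- B * conj B = -1
  have hmapB : B.map (starRingEnd ℂ) = (starRingEnd ℂ) c • stdJ n := by
    rw [hBc]; ext p q
    simp only [Matrix.map_apply, Matrix.smul_apply, smul_eq_mul, _root_.map_mul]
    congr 1
    exact congrFun (congrFun (stdJ_map_conj n) p) q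
  have hBB : B * B.map (starRingEnd ℂ) = -1 := by
    rw [hmapB, hBc, Matrix.smul_mul, Matrix.mul_smul, smul_smul, stdJ_sq]
    have : c * (starRingEnd ℂ) c = 1 := hcc
    rw [this, one_smul]
  refine ⟨⟨c, habs, hBc⟩, hBB, ?_⟩
  rw [hBB]
  intro h
  have := congrFun (congrFun h i0) i0
  simp [Matrix.one_apply, Matrix.neg_apply] at this
  norm_num at this
end

section
/- Let J = [[0, I_n], [-I_n, 0]] (a 2n×2n real matrix). If B is a 2n×2n real matrix such that J·g·J⁻¹·B = B·g for all g ∈ SO(2n), then J⁻¹B is a scalar matrix ±I, hence B = ±J and B² = -I ≠ I. Consequently there is no B with B² = I intertwining the SO(2n)-action with its twist by conjugation by J. -/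
/-!
Multiplying the intertwining relation by `J⁻¹` shows that `J⁻¹B` commutes with `SO(2n)`.
In dimension at least three, commuting with the diagonal matrices that flip two signs kills
the off-diagonal entries, and commuting with the permutation matrices of 3-cycles makes the
diagonal constant, so `J⁻¹B = c • 1`. Since `J⁻¹B` is orthogonal, `c² = 1`, whence `B = ±J`
and `B² = J² = -1`.
-/

open Matrix

/-- The standard complex-structure matrix `J = [[0, Iₙ],[-Iₙ, 0]]` on `ℝ^n ⊕ ℝ^n`. -/
def stdJR (n : ℕ) : Matrix (Fin n ⊕ Fin n) (Fin n ⊕ Fin n) ℝ :=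
  Matrix.fromBlocks 0 1 (-1) 0

section OrthogonalCommutant

variable {ι R : Type*} [Fintype ι] [DecidableEq ι] [CommRing R]

theorem Fintype.exists_ne_ne_of_three_le_card (hι : 3 ≤ Fintype.card ι) (i j : ι) :
    ∃ k, k ≠ i ∧ k ≠ j := by
  obtain ⟨k, -, hk⟩ := Finset.exists_mem_notMem_of_card_lt_card (s := {i, j})
    (t := Finset.univ) (by rw [Finset.card_univ]; linarith [Finset.card_le_two (a := i) (b := j)])
  simp only [Finset.mem_insert, Finset.mem_singleton, not_or] at hk
  exact ⟨k, hk⟩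

theorem Equiv.Perm.permMatrix_mem_orthogonalGroup (σ : Equiv.Perm ι) :
    σ.permMatrix R ∈ orthogonalGroup ι R := by
  rw [mem_orthogonalGroup_iff, transpose_permMatrix, ← permMatrix_mul, inv_mul_cancel,
    permMatrix_one]

theorem Matrix.diagonal_mem_orthogonalGroup {d : ι → R} (hd : ∀ i, d i * d i = 1) :
    diagonal d ∈ orthogonalGroup ι R := by
  rw [mem_orthogonalGroup_iff, diagonal_transpose, diagonal_mul_diagonal, ← diagonal_one]
  exact congrArg diagonal (funext hd)

theorem Matrix.smul_one_mem_orthogonalGroup_iff [Nonempty ι] {c : R} :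
    c • (1 : Matrix ι ι R) ∈ orthogonalGroup ι R ↔ c * c = 1 := by
  rw [mem_orthogonalGroup_iff, transpose_smul, transpose_one, smul_mul_smul, one_mul,
    smul_one_eq_diagonal, ← diagonal_one, diagonal_eq_diagonal_iff, forall_const]

variable {A : Matrix ι ι R}

theorem Matrix.apply_eq_zero_of_forall_commute [IsAddTorsionFree R] (hι : 3 ≤ Fintype.card ι)
    (hA : ∀ g ∈ orthogonalGroup ι R, g.det = 1 → Commute g A) {i j : ι} (hij : i ≠ j) :
    A i j = 0 := by
  obtain ⟨k, hki, hkj⟩ := Fintype.exists_ne_ne_of_three_le_card hι i j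
  set d : ι → R := Pi.mulSingle i (-1) * Pi.mulSingle k (-1)
  have hd : ∀ l, d l * d l = 1 := by
    intro l
    simp only [d, Pi.mul_apply, Pi.mulSingle_apply]
    split_ifs <;> ring
  have hdet : (diagonal d).det = 1 := by
    simp [d, det_diagonal, Finset.prod_mul_distrib, Finset.prod_pi_mulSingle']
  have hcomm := congrFun₂ (hA _ (diagonal_mem_orthogonalGroup hd) hdet).eq i j
  simp only [diagonal_mul, mul_diagonal, d, Pi.mul_apply, Pi.mulSingle_eq_same,
    Pi.mulSingle_eq_of_ne hki.symm, Pi.mulSingle_eq_of_ne hij.symm,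
    Pi.mulSingle_eq_of_ne hkj.symm] at hcomm
  rw [← neg_eq_self]
  linear_combination hcomm

theorem Matrix.apply_self_eq_of_forall_commute (hι : 3 ≤ Fintype.card ι)
    (hA : ∀ g ∈ orthogonalGroup ι R, g.det = 1 → Commute g A) (i j : ι) :
    A i i = A j j := by
  rcases eq_or_ne i j with rfl | hij
  · rfl
  obtain ⟨k, hki, hkj⟩ := Fintype.exists_ne_ne_of_three_le_card hι i j
  set σ : Equiv.Perm ι := Equiv.swap i j * Equiv.swap j k
  have hσ : σ i = j := by
    simp [σ, Equiv.swap_apply_of_ne_of_ne hij hki.symm]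
  have hdet : (σ.permMatrix R).det = 1 := by
    simp [σ, det_permutation, Equiv.Perm.sign_swap hij, Equiv.Perm.sign_swap hkj.symm]
  have hcomm := congrFun₂ (hA _ σ.permMatrix_mem_orthogonalGroup hdet).eq i j
  rw [Equiv.Perm.permMatrix, PEquiv.toMatrix_toPEquiv_mul, PEquiv.mul_toMatrix_toPEquiv,
    submatrix_apply, submatrix_apply, id, id, hσ, (Equiv.symm_apply_eq σ).2 hσ.symm] at hcomm
  exact hcomm.symm

theorem Matrix.exists_eq_smul_one_of_forall_commute [IsAddTorsionFree R] (hι : 3 ≤ Fintype.card ι)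
    (hA : ∀ g ∈ orthogonalGroup ι R, g.det = 1 → Commute g A) : ∃ c : R, A = c • 1 := by
  obtain ⟨i₀⟩ : Nonempty ι := Fintype.card_pos_iff.1 (by omega)
  refine ⟨A i₀ i₀, ?_⟩
  ext i j
  rcases eq_or_ne i j with rfl | hij
  · simp [apply_self_eq_of_forall_commute hι hA i i₀]
  · simp [apply_eq_zero_of_forall_commute hι hA hij, hij]

theorem Matrix.commute_inv_mul_of_conj_mul_eq {P B g : Matrix ι ι R} (hP : IsUnit P.det)
    (h : P * g * P⁻¹ * B = B * g) : Commute g (P⁻¹ * B) := by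
  calc g * (P⁻¹ * B) = P⁻¹ * (P * g * P⁻¹ * B) := by
        simp only [← mul_assoc, nonsing_inv_mul _ hP, one_mul]
    _ = P⁻¹ * B * g := by rw [h, mul_assoc]

end OrthogonalCommutant

theorem stdJR_mul_self (n : ℕ) : stdJR n * stdJR n = -1 := by
  simp [stdJR, fromBlocks_multiply, ← fromBlocks_one, fromBlocks_neg]

theorem stdJR_transpose (n : ℕ) : (stdJR n)ᵀ = -stdJR n := by
  simp [stdJR, fromBlocks_transpose, fromBlocks_neg]

theorem stdJR_inv (n : ℕ) : (stdJR n)⁻¹ = -stdJR n :=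
  inv_eq_right_inv (by rw [mul_neg, stdJR_mul_self, neg_neg])

theorem stdJR_inv_mem_orthogonalGroup (n : ℕ) :
    (stdJR n)⁻¹ ∈ orthogonalGroup (Fin n ⊕ Fin n) ℝ := by
  rw [stdJR_inv, mem_orthogonalGroup_iff, transpose_neg, stdJR_transpose, neg_neg, neg_mul,
    stdJR_mul_self, neg_neg]

/-- If an orthogonal matrix `B` satisfies `J·g·J⁻¹·B = B·g` for all `g ∈ SO(2n)` (`n ≥ 2`),
then `J⁻¹B` is a scalar matrix `±1`, hence `B = ±J` and `B² = -1 ≠ 1`.  Consequently there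
is no `B` with `B² = 1` intertwining the `SO(2n)`-action with its twist by conjugation
by `J`. -/
theorem no_involutive_extension_SOstar (n : ℕ) (hn : 2 ≤ n)
    (B : Matrix (Fin n ⊕ Fin n) (Fin n ⊕ Fin n) ℝ)
    (hB : B ∈ Matrix.orthogonalGroup (Fin n ⊕ Fin n) ℝ)
    (hint : ∀ g : Matrix (Fin n ⊕ Fin n) (Fin n ⊕ Fin n) ℝ,
      g ∈ Matrix.orthogonalGroup (Fin n ⊕ Fin n) ℝ → g.det = 1 →
      stdJR n * g * (stdJR n)⁻¹ * B = B * g) :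
    ((stdJR n)⁻¹ * B = 1 ∨ (stdJR n)⁻¹ * B = -1) ∧
      (B = stdJR n ∨ B = -stdJR n) ∧ B * B = -1 ∧ B * B ≠ 1 := by
  have hJ : IsUnit (stdJR n).det :=
    isUnit_det_of_right_inverse (by rw [mul_neg, stdJR_mul_self, neg_neg])
  have i₀ : Fin n ⊕ Fin n := .inl ⟨0, by omega⟩
  obtain ⟨c, hc⟩ := exists_eq_smul_one_of_forall_commute
    (by simp only [Fintype.card_sum, Fintype.card_fin]; omega)
    fun g hg hdet => commute_inv_mul_of_conj_mul_eq hJ (hint g hg hdet)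
  have hc2 : c * c = 1 := by
    have : Nonempty (Fin n ⊕ Fin n) := ⟨i₀⟩
    exact smul_one_mem_orthogonalGroup_iff.1
      (hc ▸ Submonoid.mul_mem _ (stdJR_inv_mem_orthogonalGroup n) hB)
  have hBc : B = c • stdJR n := by
    calc B = stdJR n * ((stdJR n)⁻¹ * B) := by rw [← mul_assoc, mul_nonsing_inv _ hJ, one_mul]
      _ = c • stdJR n := by rw [hc, Matrix.mul_smul, mul_one]
  have hBB : B * B = -1 := by rw [hBc, smul_mul_smul, hc2, one_smul, stdJR_mul_self]
  refine ⟨?_, ?_, hBB, ?_⟩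
  · rcases mul_self_eq_one_iff.1 hc2 with rfl | rfl <;> simp [hc]
  · rcases mul_self_eq_one_iff.1 hc2 with rfl | rfl <;> simp [hBc]
  · intro h
    have := congrFun₂ (hBB.symm.trans h) i₀ i₀
    norm_num at this
end

section
/- Let b' be a nondegenerate symmetric bilinear form of split signature (u,u) on V' and b'' any nondegenerate symmetric bilinear form on V''. Then b' ⊗ b'' on V' ⊗ V'' has split signature (t,t) where 2t = dim(V' ⊗ V''). -/
/-! Diagonalise `b''` in an orthogonal basis `(f j)`; nondegeneracy makes every
`d j = b'' (f j) (f j)` nonzero. Expanding `x ∈ V ⊗ W` as `∑ j, x j ⊗ f j` identifies `b' ⊗ b''`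
with the orthogonal sum of the forms `d j • b'` on `Fin n → V`. Rescaling by a negative
scalar only swaps the positive and negative halves, so each `d j • b'` still has signature `(u, u)`,
and signatures add over orthogonal sums: the tensor form has signature `(n u, n u)`, where
`2 n u = dim V * dim W`. -/

open TensorProduct

/-- A real bilinear form `B` on `V` has signature `(p,q)` if `V` splits as an orthogonal
direct sum of a `p`-dimensional subspace on which `B` is positive definite and a
`q`-dimensional subspace on which `B` is negative definite. -/
def HasSignature {V : Type*} [AddCommGroup V] [Module ℝ V]
    (B : V → V → ℝ) (p q : ℕ) : Prop :=
  ∃ P N : Submodule ℝ V, IsCompl P N ∧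
    (∀ x ∈ P, ∀ y ∈ N, B x y = 0) ∧ (∀ y ∈ N, ∀ x ∈ P, B y x = 0) ∧
    (∀ x ∈ P, x ≠ 0 → 0 < B x x) ∧ (∀ x ∈ N, x ≠ 0 → B x x < 0) ∧
    Module.finrank ℝ P = p ∧ Module.finrank ℝ N = q

namespace Submodule

variable {R ι : Type*} {M : ι → Type*} [∀ i, AddCommGroup (M i)]

theorem isCompl_pi [Ring R] [∀ i, Module R (M i)] {P N : ∀ i, Submodule R (M i)}
    (h : ∀ i, IsCompl (P i) (N i)) : IsCompl (pi Set.univ P) (pi Set.univ N) := by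
  constructor
  · rw [disjoint_def]
    intro x hP hN
    funext i
    exact (disjoint_def.1 (h i).disjoint) (x i) (hP i trivial) (hN i trivial)
  · rw [codisjoint_iff, eq_top_iff]
    intro x _
    have hx i : x i ∈ P i ⊔ N i := (h i).sup_eq_top ▸ mem_top
    choose p hp n hn hpn using fun i => mem_sup.1 (hx i)
    rw [show x = p + n from funext fun i => (hpn i).symm]
    exact add_mem_sup (fun i _ => hp i) (fun i _ => hn i)

theorem finrank_pi [Field R] [∀ i, Module R (M i)] [Fintype ι]
    [∀ i, FiniteDimensional R (M i)] (P : ∀ i, Submodule R (M i)) :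
    Module.finrank R (pi Set.univ P) = ∑ i, Module.finrank R (P i) := by
  have hrange : pi Set.univ P = LinearMap.range (LinearMap.piMap fun i => (P i).subtype) := by
    ext x
    refine ⟨fun hx => ⟨fun i => ⟨x i, hx i trivial⟩, rfl⟩, ?_⟩
    rintro ⟨y, rfl⟩ i -
    exact (y i).2
  rw [hrange, LinearMap.finrank_range_of_inj, Module.finrank_pi_fintype]
  exact Pi.map_injective.2 fun i => Subtype.val_injective

end Submodule

namespace LinearMap.BilinForm

variable {R M N ι : Type*} [CommRing R] [AddCommGroup M] [Module R M] [AddCommGroup N]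
  [Module R N] [Fintype ι]

theorem apply_eq_sum_of_isOrthoᵢ {B : LinearMap.BilinForm R N} {f : Module.Basis ι R N}
    (hf : B.IsOrthoᵢ f) (x y : N) : B x y = ∑ i, f.repr x i * f.repr y i * B (f i) (f i) := by
  conv_lhs => rw [← f.sum_repr x, ← f.sum_repr y]
  simp only [map_sum, map_smul, LinearMap.sum_apply, LinearMap.smul_apply, smul_eq_mul]
  refine Finset.sum_congr rfl fun i _ => ?_
  rw [Finset.sum_eq_single i (fun j _ hji => by rw [hf hji, mul_zero])
    (fun h => absurd (Finset.mem_univ i) h)]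
  ring

theorem tmul_apply_eq_sum_of_isOrthoᵢ [DecidableEq ι] (B₁ : LinearMap.BilinForm R M)
    {B₂ : LinearMap.BilinForm R N} {f : Module.Basis ι R N} (hf : B₂.IsOrthoᵢ f) (x y : M ⊗[R] N) :
    B₁.tmul B₂ x y = ∑ i, B₂ (f i) (f i) *
      B₁ (equivFinsuppOfBasisRight f x i) (equivFinsuppOfBasisRight f y i) := by
  induction x using TensorProduct.induction_on with
  | zero => simp
  | add x x' hx hx' => simp [hx, hx', mul_add, Finset.sum_add_distrib]
  | tmul v w =>
    induction y using TensorProduct.induction_on with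
    | zero => simp
    | add y y' hy hy' => simp [hy, hy', mul_add, Finset.sum_add_distrib]
    | tmul v' w' =>
      simp only [tensorDistrib_tmul, equivFinsuppOfBasisRight_apply_tmul_apply, map_smul,
        LinearMap.smul_apply, smul_eq_mul, apply_eq_sum_of_isOrthoᵢ hf w w', Finset.sum_mul]
      exact Finset.sum_congr rfl fun i _ => by ring

end LinearMap.BilinForm

namespace HasSignature

variable {V : Type*} [AddCommGroup V] [Module ℝ V] {B : V → V → ℝ} {p q : ℕ}

theorem finrank_eq [FiniteDimensional ℝ V] (h : HasSignature B p q) :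
    Module.finrank ℝ V = p + q := by
  obtain ⟨P, N, hPN, -, -, -, -, rfl, rfl⟩ := h
  exact (Submodule.finrank_add_eq_of_isCompl hPN).symm

theorem const_mul_of_pos {c : ℝ} (hc : 0 < c) (h : HasSignature B p q) :
    HasSignature (fun x y => c * B x y) p q := by
  obtain ⟨P, N, hPN, hPN₀, hNP₀, hP, hN, hp, hq⟩ := h
  exact ⟨P, N, hPN, fun x hx y hy => mul_eq_zero_of_right c (hPN₀ x hx y hy),
    fun y hy x hx => mul_eq_zero_of_right c (hNP₀ y hy x hx),
    fun x hx hx₀ => mul_pos hc (hP x hx hx₀),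
    fun x hx hx₀ => mul_neg_of_pos_of_neg hc (hN x hx hx₀), hp, hq⟩

theorem const_mul_of_neg {c : ℝ} (hc : c < 0) (h : HasSignature B p q) :
    HasSignature (fun x y => c * B x y) q p := by
  obtain ⟨P, N, hPN, hPN₀, hNP₀, hP, hN, hp, hq⟩ := h
  exact ⟨N, P, hPN.symm, fun y hy x hx => mul_eq_zero_of_right c (hNP₀ y hy x hx),
    fun x hx y hy => mul_eq_zero_of_right c (hPN₀ x hx y hy),
    fun x hx hx₀ => mul_pos_of_neg_of_neg hc (hN x hx hx₀),
    fun x hx hx₀ => mul_neg_of_neg_of_pos hc (hP x hx hx₀), hq, hp⟩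

theorem of_linearEquiv {V' : Type*} [AddCommGroup V'] [Module ℝ V'] {B' : V' → V' → ℝ}
    (e : V' ≃ₗ[ℝ] V) (he : ∀ x y, B' x y = B (e x) (e y)) (h : HasSignature B p q) :
    HasSignature B' p q := by
  obtain ⟨P, N, hPN, hPN₀, hNP₀, hP, hN, rfl, rfl⟩ := h
  have mem {S : Submodule ℝ V} {x : V'} : x ∈ S.map (e.symm : V →ₗ[ℝ] V') ↔ e x ∈ S :=
    Submodule.mem_map_equiv S
  refine ⟨P.map (e.symm : V →ₗ[ℝ] V'), N.map (e.symm : V →ₗ[ℝ] V'),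
    (Submodule.orderIsoMapComap e.symm).isCompl hPN,
    fun x hx y hy => ?_, fun y hy x hx => ?_, fun x hx hx₀ => ?_, fun x hx hx₀ => ?_,
    LinearEquiv.finrank_map_eq _ _, LinearEquiv.finrank_map_eq _ _⟩ <;> rw [he]
  · exact hPN₀ _ (mem.1 hx) _ (mem.1 hy)
  · exact hNP₀ _ (mem.1 hy) _ (mem.1 hx)
  · exact hP _ (mem.1 hx) (e.map_ne_zero_iff.2 hx₀)
  · exact hN _ (mem.1 hx) (e.map_ne_zero_iff.2 hx₀)

end HasSignature

theorem HasSignature.pi {ι : Type*} [Fintype ι] {V : ι → Type*} [∀ i, AddCommGroup (V i)]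
    [∀ i, Module ℝ (V i)] [∀ i, FiniteDimensional ℝ (V i)]
    {B : ∀ i, LinearMap.BilinForm ℝ (V i)} {p q : ι → ℕ}
    (h : ∀ i, HasSignature (fun x y => B i x y) (p i) (q i)) :
    HasSignature (fun x y : ∀ i, V i => ∑ i, B i (x i) (y i)) (∑ i, p i) (∑ i, q i) := by
  choose P N hPN hPN₀ hNP₀ hP hN hp hq using h
  have ne_zero {x : ∀ i, V i} (hx : x ≠ 0) : ∃ i ∈ Finset.univ, x i ≠ 0 := by
    simpa [funext_iff] using hx
  refine ⟨Submodule.pi Set.univ P, Submodule.pi Set.univ N, Submodule.isCompl_pi hPN,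
    fun x hx y hy => Finset.sum_eq_zero fun i _ => hPN₀ i _ (hx i trivial) _ (hy i trivial),
    fun y hy x hx => Finset.sum_eq_zero fun i _ => hNP₀ i _ (hy i trivial) _ (hx i trivial),
    fun x hx hx₀ => ?_, fun x hx hx₀ => ?_, ?_, ?_⟩
  · refine Finset.sum_pos' (fun i _ => ?_)
      ((ne_zero hx₀).imp fun i hi => ⟨hi.1, hP i _ (hx i trivial) hi.2⟩)
    rcases eq_or_ne (x i) 0 with hxi | hxi
    · simp [hxi]
    · exact (hP i _ (hx i trivial) hxi).le
  · refine Finset.sum_neg' (fun i _ => ?_)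
      ((ne_zero hx₀).imp fun i hi => ⟨hi.1, hN i _ (hx i trivial) hi.2⟩)
    rcases eq_or_ne (x i) 0 with hxi | hxi
    · simp [hxi]
    · exact (hN i _ (hx i trivial) hxi).le
  · rw [Submodule.finrank_pi]; exact Finset.sum_congr rfl fun i _ => hp i
  · rw [Submodule.finrank_pi]; exact Finset.sum_congr rfl fun i _ => hq i

theorem tensor_with_split_is_split_general {V W : Type*}
    [AddCommGroup V] [Module ℝ V] [AddCommGroup W] [Module ℝ W]
    [FiniteDimensional ℝ V] [FiniteDimensional ℝ W]
    (b' : LinearMap.BilinForm ℝ V) (b'' : LinearMap.BilinForm ℝ W)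
    (hs'' : ∀ x y, b'' x y = b'' y x)
    (hn'' : b''.Nondegenerate)
    (u : ℕ) (hsig' : HasSignature (fun x y => b' x y) u u) :
    ∃ t : ℕ, 2 * t = Module.finrank ℝ (V ⊗[ℝ] W) ∧
      HasSignature (fun x y => (b'.tmul b'') x y) t t := by
  obtain ⟨f, hf⟩ := LinearMap.BilinForm.exists_orthogonal_basis (B := b'') ⟨hs''⟩
  have hsig_summand j : HasSignature (fun x y => (b'' (f j) (f j) • b') x y) u u := by
    rcases (hf.not_isOrtho_basis_self_of_separatingLeft hn''.1 j).lt_or_gt with h | h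
    · exact hsig'.const_mul_of_neg h
    · exact hsig'.const_mul_of_pos h
  let e := (equivFinsuppOfBasisRight f).trans (Finsupp.linearEquivFunOnFinite ℝ V _)
  refine ⟨∑ _ : Fin (Module.finrank ℝ W), u, ?_,
    (HasSignature.pi hsig_summand).of_linearEquiv e fun x y => ?_⟩
  · rw [Module.finrank_tensorProduct, hsig'.finrank_eq]
    simp only [Finset.sum_const, Finset.card_univ, Fintype.card_fin, smul_eq_mul]
    ring
  · exact b'.tmul_apply_eq_sum_of_isOrthoᵢ hf x y

/-- If `b'` is a nondegenerate symmetric bilinear form of split signature `(u,u)` and `b''`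
any nondegenerate symmetric bilinear form, then `b' ⊗ b''` has split signature `(t,t)`
where `2t = dim (V' ⊗ V'')`. -/
theorem tensor_with_split_is_split {V W : Type*}
    [AddCommGroup V] [Module ℝ V] [AddCommGroup W] [Module ℝ W]
    [FiniteDimensional ℝ V] [FiniteDimensional ℝ W]
    (b' : LinearMap.BilinForm ℝ V) (b'' : LinearMap.BilinForm ℝ W)
    (hs' : ∀ x y, b' x y = b' y x) (hs'' : ∀ x y, b'' x y = b'' y x)
    (hn' : b'.Nondegenerate) (hn'' : b''.Nondegenerate)
    (u : ℕ) (hsig' : HasSignature (fun x y => b' x y) u u) :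
    ∃ t : ℕ, 2 * t = Module.finrank ℝ (V ⊗[ℝ] W) ∧
      HasSignature (fun x y => (b'.tmul b'') x y) t t :=
  tensor_with_split_is_split_general b' b'' hs'' hn'' u hsig'
end

section
/- Let g be a real Lie algebra, ν a complex-conjugate-linear involutive automorphism of the complexification g_ℂ (a conjugation), and suppose g' is a real form of g_ℂ stable under the conjugation ν of g_ℂ over g. Write g' = (g')⁺ ⊕ (g')⁻ for the ν-eigenspace decomposition. Then g = (g')⁺ + √-1·(g')⁻, and the restriction of ν to g is an involutive (complex-linear) automorphism of g whose +1 eigenspace is (g')⁺. -/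
open TensorProduct

/-- Multiplication by `√-1` on a complex module, viewed as a real-linear map. -/
def smulI (M : Type*) [AddCommGroup M] [Module ℝ M] [Module ℂ M]
    [IsScalarTower ℝ ℂ M] : M →ₗ[ℝ] M where
  toFun x := Complex.I • x
  map_add' x y := smul_add _ x y
  map_smul' r x := smul_comm Complex.I r x

/-!
Let `τ` be the conjugation of `g_ℂ` with respect to the real form `g'`: the identity on `g'` and
`-1` on `√-1 g'`. As `ν` preserves `g'` and anticommutes with `√-1`, it preserves both summands,
so its fixed space `g` splits as `(g')⁺ ⊕ √-1 (g')⁻`, and `ν` commutes with `τ`. Hence `τ` preserves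
`g`, and its restriction `σ` is the required involution. Since `g'` is a subalgebra,
`g_ℂ = g' ⊕ √-1 g'` is a `ℤ/2`-grading of the bracket, which makes `τ`, hence `σ`, a Lie
automorphism; the fixed points of `σ` are `g ∩ g' = (g')⁺`.
-/

namespace LinearMap

section Complements

variable {R E : Type*} [Ring R] [AddCommGroup E] [Module R E]

@[simp]
lemma mem_ker_sub_id {f : E →ₗ[R] E} {x : E} : x ∈ ker (f - id) ↔ f x = x := by
  rw [mem_ker, sub_apply, id_apply, sub_eq_zero]

@[simp]
lemma mem_ker_add_id {f : E →ₗ[R] E} {x : E} : x ∈ ker (f + id) ↔ f x = -x := by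
  rw [mem_ker, add_apply, id_apply, add_eq_zero_iff_eq_neg]

lemma ker_sub_id_eq_sup_of_isCompl {p q : Submodule R E} (h : IsCompl p q) (f : E →ₗ[R] E)
    (hp : ∀ x ∈ p, f x ∈ p) (hq : ∀ x ∈ q, f x ∈ q) :
    ker (f - id) = p ⊓ ker (f - id) ⊔ q ⊓ ker (f - id) := by
  refine le_antisymm (fun x hx => ?_) (sup_le inf_le_right inf_le_right)
  obtain ⟨a, b, ha, hb, rfl⟩ := Submodule.codisjoint_iff_exists_add_eq.mp h.codisjoint x
  have hab : f a - a = -(f b - b) := by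
    rw [mem_ker_sub_id, map_add] at hx
    rw [neg_sub, eq_sub_iff_add_eq, sub_add_eq_add_sub, hx, add_sub_cancel_left]
  have ha' : f a - a = 0 :=
    (Submodule.disjoint_def.mp h.disjoint) _ (p.sub_mem (hp a ha) ha)
      (hab ▸ q.neg_mem (q.sub_mem (hq b hb) hb))
  have hb' : f b - b = 0 := by rwa [ha', zero_eq_neg] at hab
  exact Submodule.add_mem_sup ⟨ha, mem_ker_sub_id.mpr (sub_eq_zero.mp ha')⟩
    ⟨hb, mem_ker_sub_id.mpr (sub_eq_zero.mp hb')⟩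

variable {p q : Submodule R E}

noncomputable def reflectionOfIsCompl (h : IsCompl p q) : E →ₗ[R] E :=
  ofIsCompl h p.subtype (-q.subtype)

lemma reflectionOfIsCompl_add (h : IsCompl p q) {a b : E} (ha : a ∈ p) (hb : b ∈ q) :
    reflectionOfIsCompl h (a + b) = a - b := by
  rw [map_add, reflectionOfIsCompl, ofIsCompl_apply_left h ⟨a, ha⟩,
    ofIsCompl_apply_right h ⟨b, hb⟩, sub_eq_add_neg]
  rfl

lemma reflectionOfIsCompl_reflectionOfIsCompl (h : IsCompl p q) (x : E) :
    reflectionOfIsCompl h (reflectionOfIsCompl h x) = x := by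
  obtain ⟨a, b, ha, hb, rfl⟩ := Submodule.codisjoint_iff_exists_add_eq.mp h.codisjoint x
  rw [reflectionOfIsCompl_add h ha hb, sub_eq_add_neg,
    reflectionOfIsCompl_add h ha (q.neg_mem hb), sub_neg_eq_add]

lemma reflectionOfIsCompl_commute (h : IsCompl p q) (f : E →ₗ[R] E)
    (hp : ∀ x ∈ p, f x ∈ p) (hq : ∀ x ∈ q, f x ∈ q) (x : E) :
    f (reflectionOfIsCompl h x) = reflectionOfIsCompl h (f x) := by
  obtain ⟨a, b, ha, hb, rfl⟩ := Submodule.codisjoint_iff_exists_add_eq.mp h.codisjoint x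
  rw [reflectionOfIsCompl_add h ha hb, map_add, map_sub,
    reflectionOfIsCompl_add h (hp a ha) (hq b hb)]

lemma ker_reflectionOfIsCompl_sub_id [Invertible (2 : R)] (h : IsCompl p q) :
    ker (reflectionOfIsCompl h - id) = p := by
  refine le_antisymm (fun x hx => ?_) (fun a ha => ?_)
  · obtain ⟨a, b, ha, hb, rfl⟩ := Submodule.codisjoint_iff_exists_add_eq.mp h.codisjoint x
    rw [mem_ker_sub_id, reflectionOfIsCompl_add h ha hb, sub_eq_add_neg, add_right_inj,
      neg_eq_iff_add_eq_zero, ← two_smul R] at hx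
    have hb0 : b = 0 := by simpa using congrArg (⅟(2 : R) • ·) hx
    rwa [hb0, add_zero]
  · exact mem_ker_sub_id.mpr (by simpa using reflectionOfIsCompl_add h ha q.zero_mem)

end Complements

lemma reflectionOfIsCompl_lie {R E : Type*} [Ring R] [LieRing E] [Module R E]
    {p q : Submodule R E} (h : IsCompl p q)
    (hpp : ∀ x ∈ p, ∀ y ∈ p, ⁅x, y⁆ ∈ p) (hpq : ∀ x ∈ p, ∀ y ∈ q, ⁅x, y⁆ ∈ q)
    (hqp : ∀ x ∈ q, ∀ y ∈ p, ⁅x, y⁆ ∈ q) (hqq : ∀ x ∈ q, ∀ y ∈ q, ⁅x, y⁆ ∈ p) (x y : E) :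
    reflectionOfIsCompl h ⁅x, y⁆ = ⁅reflectionOfIsCompl h x, reflectionOfIsCompl h y⁆ := by
  obtain ⟨a, b, ha, hb, rfl⟩ := Submodule.codisjoint_iff_exists_add_eq.mp h.codisjoint x
  obtain ⟨c, d, hc, hd, rfl⟩ := Submodule.codisjoint_iff_exists_add_eq.mp h.codisjoint y
  have hsplit : ⁅a + b, c + d⁆ = (⁅a, c⁆ + ⁅b, d⁆) + (⁅a, d⁆ + ⁅b, c⁆) := by
    rw [add_lie, lie_add, lie_add]
    abel
  rw [hsplit, reflectionOfIsCompl_add h (p.add_mem (hpp a ha c hc) (hqq b hb d hd))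
      (q.add_mem (hpq a ha d hd) (hqp b hb c hc)),
    reflectionOfIsCompl_add h ha hb, reflectionOfIsCompl_add h hc hd,
    sub_lie, lie_sub, lie_sub]
  abel

lemma map_ker_sub_id_of_comp_eq {R M N : Type*} [Ring R] [AddCommGroup M] [Module R M]
    [AddCommGroup N] [Module R N] {e : M →ₗ[R] N} (he : Function.Injective e)
    {σ : M →ₗ[R] M} {τ : N →ₗ[R] N} (hστ : ∀ x, e (σ x) = τ (e x)) :
    (ker (σ - id)).map e = range e ⊓ ker (τ - id) := by
  ext z
  constructor
  · rintro ⟨x, hx, rfl⟩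
    exact ⟨mem_range_self e x, mem_ker_sub_id.mpr (by rw [← hστ, mem_ker_sub_id.mp hx])⟩
  · rintro ⟨⟨x, rfl⟩, hx⟩
    exact ⟨x, mem_ker_sub_id.mpr (he (by rw [hστ, mem_ker_sub_id.mp hx])), rfl⟩

end LinearMap

section ComplexStructure

variable {V : Type*} [AddCommGroup V] [Module ℝ V] [Module ℂ V] [IsScalarTower ℝ ℂ V]

lemma smulI_apply (z : V) : smulI V z = Complex.I • z := rfl

lemma smulI_smulI (z : V) : smulI V (smulI V z) = -z := by
  rw [smulI_apply, smulI_apply, smul_smul, Complex.I_mul_I, neg_one_smul]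

lemma smulI_injective : Function.Injective (smulI V) := fun a b h => by
  simpa [smulI_smulI] using congrArg (smulI V) h

lemma apply_mem_map_smulI {W : Submodule ℝ V} {ν : V →ₗ[ℝ] V}
    (hν : ∀ z, ν (smulI V z) = -smulI V (ν z)) (hνW : ∀ x ∈ W, ν x ∈ W) :
    ∀ z ∈ W.map (smulI V), ν z ∈ W.map (smulI V) := by
  rintro _ ⟨x, hx, rfl⟩
  rw [hν, ← map_neg]
  exact Submodule.mem_map_of_mem (W.neg_mem (hνW x hx))

lemma map_smulI_ker_add_id {ν : V →ₗ[ℝ] V} (hν : ∀ z, ν (smulI V z) = -smulI V (ν z)) :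
    (LinearMap.ker (ν + LinearMap.id)).map (smulI V) = LinearMap.ker (ν - LinearMap.id) := by
  ext z
  constructor
  · rintro ⟨x, hx, rfl⟩
    rw [LinearMap.mem_ker_sub_id, hν, LinearMap.mem_ker_add_id.mp hx, map_neg, neg_neg]
  · intro hz
    refine ⟨-smulI V z, LinearMap.mem_ker_add_id.mpr ?_, by rw [map_neg, smulI_smulI, neg_neg]⟩
    rw [map_neg, hν, LinearMap.mem_ker_sub_id.mp hz]

theorem ker_sub_id_eq_of_isCompl_map_smulI {W : Submodule ℝ V}
    (hW : IsCompl W (W.map (smulI V))) {ν : V →ₗ[ℝ] V}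
    (hν : ∀ z, ν (smulI V z) = -smulI V (ν z)) (hνW : ∀ x ∈ W, ν x ∈ W) :
    LinearMap.ker (ν - LinearMap.id) =
      W ⊓ LinearMap.ker (ν - LinearMap.id) ⊔
        (W ⊓ LinearMap.ker (ν + LinearMap.id)).map (smulI V) := by
  rw [Submodule.map_inf _ smulI_injective, map_smulI_ker_add_id hν]
  exact LinearMap.ker_sub_id_eq_sup_of_isCompl hW ν hνW (apply_mem_map_smulI hν hνW)

end ComplexStructure

section LieComplexStructure

variable {V : Type*} [LieRing V] [LieAlgebra ℂ V] [Module ℝ V] [IsScalarTower ℝ ℂ V]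

lemma reflectionOfIsCompl_map_smulI_lie {W : Submodule ℝ V}
    (hW : IsCompl W (W.map (smulI V))) (hsub : ∀ x ∈ W, ∀ y ∈ W, ⁅x, y⁆ ∈ W) (x y : V) :
    LinearMap.reflectionOfIsCompl hW ⁅x, y⁆ =
      ⁅LinearMap.reflectionOfIsCompl hW x, LinearMap.reflectionOfIsCompl hW y⁆ := by
  have smulI_lie (a b : V) : ⁅smulI V a, b⁆ = smulI V ⁅a, b⁆ := smul_lie Complex.I a b
  have lie_smulI (a b : V) : ⁅a, smulI V b⁆ = smulI V ⁅a, b⁆ := lie_smul Complex.I a b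
  refine LinearMap.reflectionOfIsCompl_lie hW hsub ?_ ?_ ?_ x y
  · rintro a ha _ ⟨b, hb, rfl⟩
    exact lie_smulI a b ▸ Submodule.mem_map_of_mem (hsub a ha b hb)
  · rintro _ ⟨a, ha, rfl⟩ b hb
    exact smulI_lie a b ▸ Submodule.mem_map_of_mem (hsub a ha b hb)
  · rintro _ ⟨a, ha, rfl⟩ _ ⟨b, hb, rfl⟩
    rw [smulI_lie, lie_smulI, smulI_smulI]
    exact W.neg_mem (hsub a ha b hb)

end LieComplexStructure

namespace Complexification

section Module

variable {L : Type*} [AddCommGroup L] [Module ℝ L]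

noncomputable def re : ℂ ⊗[ℝ] L →ₗ[ℝ] L :=
  lift ((LinearMap.lsmul ℝ L).comp Complex.reLm)

@[simp]
lemma re_tmul (c : ℂ) (x : L) : re (c ⊗ₜ[ℝ] x) = c.re • x := rfl

@[simp]
lemma re_mk (x : L) : re (mk ℝ ℂ L 1 x) = x := by
  simp

lemma mk_injective : Function.Injective (mk ℝ ℂ L 1) :=
  Function.LeftInverse.injective re_mk

lemma mk_re_of_mem_range {z : ℂ ⊗[ℝ] L} (hz : z ∈ LinearMap.range (mk ℝ ℂ L 1)) :
    mk ℝ ℂ L 1 (re z) = z := by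
  obtain ⟨x, rfl⟩ := hz
  rw [re_mk]

variable {ν : ℂ ⊗[ℝ] L →ₗ[ℝ] ℂ ⊗[ℝ] L}

lemma conj_smulI (hconj : ∀ (c : ℂ) (x : L), ν (c ⊗ₜ[ℝ] x) = (starRingEnd ℂ c) ⊗ₜ[ℝ] x)
    (z : ℂ ⊗[ℝ] L) : ν (smulI _ z) = -smulI _ (ν z) := by
  induction z using TensorProduct.induction_on with
  | zero => simp
  | tmul c x =>
    rw [smulI_apply, smulI_apply, smul_tmul', hconj, hconj, smul_tmul', ← neg_tmul, smul_eq_mul,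
      smul_eq_mul, map_mul, Complex.conj_I, neg_mul]
  | add x y hx hy => simp only [map_add, hx, hy, neg_add]

lemma add_conj (hconj : ∀ (c : ℂ) (x : L), ν (c ⊗ₜ[ℝ] x) = (starRingEnd ℂ c) ⊗ₜ[ℝ] x)
    (z : ℂ ⊗[ℝ] L) : z + ν z = (2 : ℝ) • mk ℝ ℂ L 1 (re z) := by
  induction z using TensorProduct.induction_on with
  | zero => simp
  | tmul c x =>
    rw [hconj, ← add_tmul, Complex.add_conj, re_tmul, mk_apply, tmul_smul,
      smul_smul, smul_tmul', Complex.real_smul, mul_one]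
  | add x y hx hy =>
    rw [map_add, map_add, map_add, smul_add, ← hx, ← hy]
    abel

lemma ker_conj_sub_id (hconj : ∀ (c : ℂ) (x : L), ν (c ⊗ₜ[ℝ] x) = (starRingEnd ℂ c) ⊗ₜ[ℝ] x) :
    LinearMap.ker (ν - LinearMap.id) = LinearMap.range (mk ℝ ℂ L 1) := by
  apply le_antisymm
  · intro z hz
    have h := add_conj hconj z
    rw [LinearMap.mem_ker_sub_id.mp hz, ← two_smul ℝ] at h
    exact ⟨re z, (smul_right_injective _ two_ne_zero h).symm⟩
  · rintro _ ⟨x, rfl⟩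
    rw [LinearMap.mem_ker_sub_id, mk_apply, hconj, map_one]

end Module

section Lie

variable {L : Type*} [LieRing L] [LieAlgebra ℝ L]

lemma mk_lie (x y : L) :
    mk ℝ ℂ L 1 ⁅x, y⁆ = ⁅mk ℝ ℂ L 1 x, mk ℝ ℂ L 1 y⁆ := by
  simp only [mk_apply, LieAlgebra.ExtendScalars.bracket_tmul, one_mul]

theorem exists_involution_of_commute_conj {ν τ : ℂ ⊗[ℝ] L →ₗ[ℝ] ℂ ⊗[ℝ] L}
    (hconj : ∀ (c : ℂ) (x : L), ν (c ⊗ₜ[ℝ] x) = (starRingEnd ℂ c) ⊗ₜ[ℝ] x)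
    (hτν : ∀ z, ν (τ z) = τ (ν z)) (hτ_lie : ∀ z w, τ ⁅z, w⁆ = ⁅τ z, τ w⁆)
    (hτ_inv : ∀ z, τ (τ z) = z) :
    ∃ σ : L ≃ₗ[ℝ] L, (∀ x y : L, σ ⁅x, y⁆ = ⁅σ x, σ y⁆) ∧ (∀ x, σ (σ x) = x) ∧
      (LinearMap.ker (σ.toLinearMap - LinearMap.id)).map (mk ℝ ℂ L 1) =
        LinearMap.ker (ν - LinearMap.id) ⊓ LinearMap.ker (τ - LinearMap.id) := by
  set e := mk ℝ ℂ L 1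
  set σ : L →ₗ[ℝ] L := re ∘ₗ τ ∘ₗ e
  have he (x : L) : e (σ x) = τ (e x) := by
    refine mk_re_of_mem_range (z := τ (e x)) ?_
    rw [← ker_conj_sub_id hconj, LinearMap.mem_ker_sub_id, hτν,
      LinearMap.mem_ker_sub_id.mp ((ker_conj_sub_id hconj).ge (LinearMap.mem_range_self e x))]
  have hσ : Function.Involutive σ := fun x => mk_injective (by rw [he, he, hτ_inv])
  refine ⟨.ofInvolutive σ hσ, fun x y => mk_injective ?_, hσ, ?_⟩
  · change e (σ ⁅x, y⁆) = e ⁅σ x, σ y⁆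
    rw [he, mk_lie, hτ_lie, ← he, ← he, mk_lie]
  · rw [ker_conj_sub_id hconj]
    exact LinearMap.map_ker_sub_id_of_comp_eq mk_injective he

end Lie

end Complexification

theorem involution_from_real_form_general {L : Type*} [LieRing L] [LieAlgebra ℝ L]
    (ν : (ℂ ⊗[ℝ] L) →ₗ[ℝ] (ℂ ⊗[ℝ] L))
    (hconj : ∀ (c : ℂ) (x : L), ν (c ⊗ₜ[ℝ] x) = (starRingEnd ℂ c) ⊗ₜ[ℝ] x)
    (g' : Submodule ℝ (ℂ ⊗[ℝ] L))
    (hsub : ∀ x ∈ g', ∀ y ∈ g', ⁅x, y⁆ ∈ g')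
    (hrf : IsCompl g' (g'.map (smulI (ℂ ⊗[ℝ] L))))
    (hstab : ∀ x ∈ g', ν x ∈ g') :
    LinearMap.range (TensorProduct.mk ℝ ℂ L 1) =
        (g' ⊓ LinearMap.ker (ν - LinearMap.id)) ⊔
          ((g' ⊓ LinearMap.ker (ν + LinearMap.id)).map (smulI (ℂ ⊗[ℝ] L))) ∧
      ∃ σ : L ≃ₗ[ℝ] L, (∀ x y : L, σ ⁅x, y⁆ = ⁅σ x, σ y⁆) ∧ (∀ x, σ (σ x) = x) ∧
        Submodule.map (TensorProduct.mk ℝ ℂ L 1)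
            (LinearMap.ker (σ.toLinearMap - LinearMap.id)) =
          g' ⊓ LinearMap.ker (ν - LinearMap.id) := by
  have hνI := Complexification.conj_smulI hconj
  refine ⟨(Complexification.ker_conj_sub_id hconj).symm.trans
    (ker_sub_id_eq_of_isCompl_map_smulI hrf hνI hstab), ?_⟩
  set τ := LinearMap.reflectionOfIsCompl hrf
  have hτν (z) : ν (τ z) = τ (ν z) :=
    LinearMap.reflectionOfIsCompl_commute hrf ν hstab (apply_mem_map_smulI hνI hstab) z
  obtain ⟨σ, hσ_lie, hσ_inv, hσ_fix⟩ :=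
    Complexification.exists_involution_of_commute_conj hconj hτν
    (reflectionOfIsCompl_map_smulI_lie hrf hsub)
    (LinearMap.reflectionOfIsCompl_reflectionOfIsCompl hrf)
  refine ⟨σ, hσ_lie, hσ_inv, ?_⟩
  rw [hσ_fix, LinearMap.ker_reflectionOfIsCompl_sub_id, inf_comm]

/-- Let `ν` be the conjugation of `g_ℂ` over `g` and let `g'` be a real form of `g_ℂ`
(a bracket-closed real subspace with `g_ℂ = g' ⊕ √-1 g'`) stable under `ν`, with
`ν`-eigenspace decomposition `g' = (g')⁺ ⊕ (g')⁻`.  Then `g = (g')⁺ + √-1·(g')⁻`, and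
`ν` induces an involutive automorphism of `g` whose `+1` eigenspace corresponds to
`(g')⁺`. -/
theorem involution_from_real_form {L : Type*} [LieRing L] [LieAlgebra ℝ L]
    (ν : (ℂ ⊗[ℝ] L) →ₗ[ℝ] (ℂ ⊗[ℝ] L))
    (hconj : ∀ (c : ℂ) (x : L), ν (c ⊗ₜ[ℝ] x) = (starRingEnd ℂ c) ⊗ₜ[ℝ] x)
    (hbr : ∀ x y : ℂ ⊗[ℝ] L, ν ⁅x, y⁆ = ⁅ν x, ν y⁆)
    (hinv : ∀ x, ν (ν x) = x)
    (g' : Submodule ℝ (ℂ ⊗[ℝ] L))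
    (hsub : ∀ x ∈ g', ∀ y ∈ g', ⁅x, y⁆ ∈ g')
    (hrf : IsCompl g' (g'.map (smulI (ℂ ⊗[ℝ] L))))
    (hstab : ∀ x ∈ g', ν x ∈ g') :
    LinearMap.range (TensorProduct.mk ℝ ℂ L 1) =
        (g' ⊓ LinearMap.ker (ν - LinearMap.id)) ⊔
          ((g' ⊓ LinearMap.ker (ν + LinearMap.id)).map (smulI (ℂ ⊗[ℝ] L))) ∧
      ∃ σ : L ≃ₗ[ℝ] L, (∀ x y : L, σ ⁅x, y⁆ = ⁅σ x, σ y⁆) ∧ (∀ x, σ (σ x) = x) ∧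
        Submodule.map (TensorProduct.mk ℝ ℂ L 1)
            (LinearMap.ker (σ.toLinearMap - LinearMap.id)) =
          g' ⊓ LinearMap.ker (ν - LinearMap.id) :=
  involution_from_real_form_general ν hconj g' hsub hrf hstab
end

section
/- Let V' and V'' be real vector spaces with nondegenerate symmetric bilinear forms b', b'' of signatures (u,u) and (v,w) respectively, with orthogonal decompositions V' = V'₁ ⊕ V'₂ (positive/negative definite, each of dimension u) and V'' = V''₁ ⊕ V''₂ (of dimensions v, w). Then in V'⊗V'', the subspace (V'₁⊗V''₁) ⊕ (V'₂⊗V''₂) is positive definite for b'⊗b'', the subspace (V'₁⊗V''₂) ⊕ (V'₂⊗V''₁) is negative definite, the two are orthogonal, and both have dimension u(v+w). -/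
open TensorProduct

/-- The image in `V ⊗ W` of a pair of subspaces, i.e. the span of the elementary tensors
`x ⊗ y` with `x ∈ p` and `y ∈ q`. -/
def tensorSub {V W : Type*} [AddCommGroup V] [Module ℝ V] [AddCommGroup W] [Module ℝ W]
    (p : Submodule ℝ V) (q : Submodule ℝ W) : Submodule ℝ (V ⊗[ℝ] W) :=
  Submodule.span ℝ {z | ∃ x ∈ p, ∃ y ∈ q, z = x ⊗ₜ[ℝ] y}

/-!
If `b'` and `b''` are symmetric and positive definite, so is `b' ⊗ b''`: for orthogonal bases
`eᵢ`, `fⱼ` of the factors, the `eᵢ ⊗ fⱼ` form an orthogonal basis on which `b' ⊗ b''` takes the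
positive values `b'(eᵢ, eᵢ) b''(fⱼ, fⱼ)`. Since `(-b') ⊗ (-b'') = b' ⊗ b''` and
`b' ⊗ (-b'') = -(b' ⊗ b'')`, this gives the sign of `b' ⊗ b''` on each of the blocks `P' ⊗ P''`,
`N' ⊗ N''`, `P' ⊗ N''`, `N' ⊗ P''`. Two blocks are orthogonal as soon as their left or their right
factors are, and a definite block meets a block orthogonal to it only in `0`, so the dimensions
of the sums add up.
-/

open LinearMap (BilinForm)

namespace LinearMap.BilinForm

section CommRing

variable {R M N : Type*} [CommRing R] [AddCommGroup M] [Module R M] [AddCommGroup N] [Module R N]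

lemma apply_eq_zero_of_mem_span {B : BilinForm R M} {s t : Set M}
    (h : ∀ x ∈ s, ∀ y ∈ t, B x y = 0) {x y : M} (hx : x ∈ Submodule.span R s)
    (hy : y ∈ Submodule.span R t) : B x y = 0 := by
  have hB := Submodule.apply_mem_map₂ B hx hy
  rwa [Submodule.map₂_span_span, (Submodule.span_eq_bot).2, Submodule.mem_bot] at hB
  rintro _ ⟨x, hx, y, hy, rfl⟩
  exact h x hx y hy

lemma apply_eq_zero_of_mem_sup_left {B : BilinForm R M} {p₁ p₂ q : Submodule R M}
    (h₁ : ∀ x ∈ p₁, ∀ y ∈ q, B x y = 0) (h₂ : ∀ x ∈ p₂, ∀ y ∈ q, B x y = 0) :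
    ∀ x ∈ p₁ ⊔ p₂, ∀ y ∈ q, B x y = 0 := by
  intro x hx y hy
  obtain ⟨x₁, hx₁, x₂, hx₂, rfl⟩ := Submodule.mem_sup.1 hx
  rw [map_add, LinearMap.add_apply, h₁ x₁ hx₁ y hy, h₂ x₂ hx₂ y hy, add_zero]

lemma apply_eq_zero_of_mem_sup_right {B : BilinForm R M} {p q₁ q₂ : Submodule R M}
    (h₁ : ∀ x ∈ p, ∀ y ∈ q₁, B x y = 0) (h₂ : ∀ x ∈ p, ∀ y ∈ q₂, B x y = 0) :
    ∀ x ∈ p, ∀ y ∈ q₁ ⊔ q₂, B x y = 0 := by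
  intro x hx y hy
  obtain ⟨y₁, hy₁, y₂, hy₂, rfl⟩ := Submodule.mem_sup.1 hy
  rw [map_add, h₁ x hx y₁ hy₁, h₂ x hx y₂ hy₂, add_zero]

lemma apply_self_eq_sum_of_isOrthoᵢ {ι : Type*} [Fintype ι] {B : BilinForm R M}
    {g : Module.Basis ι R M} (hg : B.IsOrthoᵢ g) (z : M) :
    B z z = ∑ i, g.repr z i * g.repr z i * B (g i) (g i) := by
  conv_lhs => rw [← g.sum_repr z]
  simp only [map_sum, map_smul, LinearMap.sum_apply, LinearMap.smul_apply, smul_eq_mul]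
  refine Finset.sum_congr rfl fun i _ => ?_
  rw [Finset.sum_eq_single i (fun j _ hji => by rw [hg hji]; ring) (by simp)]
  ring

lemma disjoint_of_apply_self_pos [PartialOrder R] {B : BilinForm R M} {p q : Submodule R M}
    (hp : ∀ x ∈ p, x ≠ 0 → 0 < B x x) (hpq : ∀ x ∈ p, ∀ y ∈ q, B x y = 0) : Disjoint p q := by
  rw [Submodule.disjoint_def]
  intro x hxp hxq
  by_contra hx
  exact (hp x hxp hx).ne' (hpq x hxp x hxq)

lemma neg_tmul_neg (B₁ : BilinForm R M) (B₂ : BilinForm R N) :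
    (-B₁).tmul (-B₂) = B₁.tmul B₂ := by
  ext
  simp

lemma tmul_neg (B₁ : BilinForm R M) (B₂ : BilinForm R N) :
    B₁.tmul (-B₂) = -B₁.tmul B₂ := by
  ext
  simp

lemma tmul_mapIncl_apply_mapIncl (B₁ : BilinForm R M) (B₂ : BilinForm R N) (p : Submodule R M)
    (q : Submodule R N) (s t : p ⊗[R] q) :
    B₁.tmul B₂ (mapIncl p q s) (mapIncl p q t) = (B₁.restrict p).tmul (B₂.restrict q) s t := by
  induction s using TensorProduct.induction_on with
  | zero => simp
  | add s s' hs hs' => simp only [map_add, LinearMap.add_apply, hs, hs']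
  | tmul x y =>
    induction t using TensorProduct.induction_on with
    | zero => simp
    | add t t' ht ht' => simp only [map_add, ht, ht']
    | tmul x' y' => simp [mapIncl]

end CommRing

section LinearOrderedField

variable {𝕜 E F : Type*} [Field 𝕜] [LinearOrder 𝕜] [IsStrictOrderedRing 𝕜]
  [AddCommGroup E] [Module 𝕜 E] [AddCommGroup F] [Module 𝕜 F]

lemma apply_self_pos_of_isOrthoᵢ {ι : Type*} [Fintype ι] {B : BilinForm 𝕜 E}
    {g : Module.Basis ι 𝕜 E} (hg : B.IsOrthoᵢ g) (hpos : ∀ i, 0 < B (g i) (g i)) {z : E}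
    (hz : z ≠ 0) : 0 < B z z := by
  obtain ⟨i, hi⟩ := Finsupp.ne_iff.1 (g.repr.map_ne_zero_iff.2 hz)
  rw [apply_self_eq_sum_of_isOrthoᵢ hg]
  exact Finset.sum_pos' (fun j _ => mul_nonneg (mul_self_nonneg _) (hpos j).le)
    ⟨i, Finset.mem_univ i, mul_pos (mul_self_pos.2 hi) (hpos i)⟩

lemma tmul_apply_self_pos [FiniteDimensional 𝕜 E] [FiniteDimensional 𝕜 F] {B₁ : BilinForm 𝕜 E}
    {B₂ : BilinForm 𝕜 F} (hB₁ : B₁.IsSymm) (hB₂ : B₂.IsSymm) (h₁ : ∀ x ≠ 0, 0 < B₁ x x)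
    (h₂ : ∀ y ≠ 0, 0 < B₂ y y) {z : E ⊗[𝕜] F} (hz : z ≠ 0) : 0 < B₁.tmul B₂ z z := by
  obtain ⟨e, he⟩ := exists_orthogonal_basis (isSymm_iff.1 hB₁)
  obtain ⟨f, hf⟩ := exists_orthogonal_basis (isSymm_iff.1 hB₂)
  refine apply_self_pos_of_isOrthoᵢ (g := e.tensorProduct f) ?_ ?_ hz
  · rintro ⟨i, j⟩ ⟨i', j'⟩ hne
    simp only [Function.onFun, Module.Basis.tensorProduct_apply, tensorDistrib_tmul, smul_eq_mul]
    obtain hi | hj : i ≠ i' ∨ j ≠ j' := by simpa only [ne_eq, Prod.mk.injEq, not_and_or] using hne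
    · rw [he hi, mul_zero]
    · rw [hf hj, zero_mul]
  · rintro ⟨i, j⟩
    simp only [Module.Basis.tensorProduct_apply, tensorDistrib_tmul, smul_eq_mul]
    exact mul_pos (h₂ _ (f.ne_zero j)) (h₁ _ (e.ne_zero i))

lemma apply_self_pos_of_mem_sup {B : BilinForm 𝕜 E} {p q : Submodule 𝕜 E}
    (hp : ∀ x ∈ p, x ≠ 0 → 0 < B x x) (hq : ∀ y ∈ q, y ≠ 0 → 0 < B y y)
    (hpq : ∀ x ∈ p, ∀ y ∈ q, B x y = 0) (hqp : ∀ y ∈ q, ∀ x ∈ p, B y x = 0) :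
    ∀ z ∈ p ⊔ q, z ≠ 0 → 0 < B z z := by
  intro z hz hz₀
  obtain ⟨x, hx, y, hy, rfl⟩ := Submodule.mem_sup.1 hz
  have hxy : B (x + y) (x + y) = B x x + B y y := by
    simp only [map_add, LinearMap.add_apply, hpq x hx y hy, hqp y hy x hx, add_zero, zero_add]
  rw [hxy]
  rcases eq_or_ne x 0 with rfl | hx₀
  · simpa using hq y hy (by simpa using hz₀)
  rcases eq_or_ne y 0 with rfl | hy₀
  · simpa using hp x hx hx₀
  exact add_pos (hp x hx hx₀) (hq y hy hy₀)

end LinearOrderedField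

end LinearMap.BilinForm

section TensorSub

open LinearMap.BilinForm

variable {V W : Type*} [AddCommGroup V] [Module ℝ V] [AddCommGroup W] [Module ℝ W]

lemma tensorSub_eq_range_mapIncl (p : Submodule ℝ V) (q : Submodule ℝ W) :
    tensorSub p q = LinearMap.range (mapIncl p q) := by
  rw [range_mapIncl, Submodule.map₂_eq_span_image2, tensorSub]
  congr 1
  ext z
  simp [Set.mem_image2, eq_comm]

lemma finrank_tensorSub (p : Submodule ℝ V) (q : Submodule ℝ W) :
    Module.finrank ℝ (tensorSub p q) = Module.finrank ℝ p * Module.finrank ℝ q := by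
  rw [tensorSub_eq_range_mapIncl, LinearMap.finrank_range_of_inj
    (Module.Flat.tensorProduct_mapIncl_injective_of_right p q), Module.finrank_tensorProduct]

lemma tmul_apply_eq_zero_of_mem_tensorSub {B₁ : BilinForm ℝ V} {B₂ : BilinForm ℝ W}
    {p p' : Submodule ℝ V} {q q' : Submodule ℝ W}
    (h : (∀ x ∈ p, ∀ x' ∈ p', B₁ x x' = 0) ∨ ∀ y ∈ q, ∀ y' ∈ q', B₂ y y' = 0) :
    ∀ z ∈ tensorSub p q, ∀ z' ∈ tensorSub p' q', B₁.tmul B₂ z z' = 0 := by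
  refine fun z hz z' hz' => apply_eq_zero_of_mem_span ?_ hz hz'
  rintro _ ⟨x, hx, y, hy, rfl⟩ _ ⟨x', hx', y', hy', rfl⟩
  rw [tensorDistrib_tmul, smul_eq_mul]
  rcases h with h | h
  · rw [h x hx x' hx', mul_zero]
  · rw [h y hy y' hy', zero_mul]

lemma tmul_apply_self_pos_of_mem_tensorSub [FiniteDimensional ℝ V] [FiniteDimensional ℝ W]
    {B₁ : BilinForm ℝ V} {B₂ : BilinForm ℝ W} (hB₁ : B₁.IsSymm) (hB₂ : B₂.IsSymm)
    {p : Submodule ℝ V} {q : Submodule ℝ W} (hp : ∀ x ∈ p, x ≠ 0 → 0 < B₁ x x)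
    (hq : ∀ y ∈ q, y ≠ 0 → 0 < B₂ y y) {z : V ⊗[ℝ] W} (hz : z ∈ tensorSub p q) (hz₀ : z ≠ 0) :
    0 < B₁.tmul B₂ z z := by
  rw [tensorSub_eq_range_mapIncl] at hz
  obtain ⟨t, rfl⟩ := hz
  rw [tmul_mapIncl_apply_mapIncl]
  refine tmul_apply_self_pos (hB₁.restrict p) (hB₂.restrict q)
    (fun x hx => hp x x.2 (by simpa using hx)) (fun y hy => hq y y.2 (by simpa using hy)) ?_
  rintro rfl
  exact hz₀ (map_zero _)

end TensorSub

structure IsDefiniteSplitting {M : Type*} [AddCommGroup M] [Module ℝ M] (B : BilinForm ℝ M)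
    (p n : Submodule ℝ M) : Prop where
  orthogonal : ∀ x ∈ p, ∀ y ∈ n, B x y = 0
  pos : ∀ x ∈ p, x ≠ 0 → 0 < B x x
  neg : ∀ x ∈ n, x ≠ 0 → B x x < 0

namespace IsDefiniteSplitting

open LinearMap.BilinForm

variable {V W : Type*} [AddCommGroup V] [Module ℝ V] [AddCommGroup W] [Module ℝ W]
  {B₁ : BilinForm ℝ V} {B₂ : BilinForm ℝ W} {p₁ n₁ : Submodule ℝ V} {p₂ n₂ : Submodule ℝ W}

lemma orthogonal_symm (h : IsDefiniteSplitting B₁ p₁ n₁) (hB : B₁.IsSymm) :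
    ∀ y ∈ n₁, ∀ x ∈ p₁, B₁ y x = 0 :=
  fun y hy x hx => hB.eq x y ▸ h.orthogonal x hx y hy

lemma neg_swap (h : IsDefiniteSplitting B₁ p₁ n₁) (hB : B₁.IsSymm) :
    IsDefiniteSplitting (-B₁) n₁ p₁ where
  orthogonal y hy x hx := by simp [h.orthogonal_symm hB y hy x hx]
  pos x hx hx₀ := neg_pos.2 (h.neg x hx hx₀)
  neg x hx hx₀ := neg_neg_iff_pos.2 (h.pos x hx hx₀)

variable [FiniteDimensional ℝ V] [FiniteDimensional ℝ W]

lemma tmul_apply_self_pos (h₁ : IsDefiniteSplitting B₁ p₁ n₁) (h₂ : IsDefiniteSplitting B₂ p₂ n₂)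
    (hB₁ : B₁.IsSymm) (hB₂ : B₂.IsSymm) :
    ∀ z ∈ tensorSub p₁ p₂ ⊔ tensorSub n₁ n₂, z ≠ 0 → 0 < B₁.tmul B₂ z z := by
  refine apply_self_pos_of_mem_sup
    (fun z hz => tmul_apply_self_pos_of_mem_tensorSub hB₁ hB₂ h₁.pos h₂.pos hz)
    (fun z hz hz₀ => ?_)
    (tmul_apply_eq_zero_of_mem_tensorSub (.inl h₁.orthogonal))
    (tmul_apply_eq_zero_of_mem_tensorSub (.inl (h₁.orthogonal_symm hB₁)))
  simpa only [neg_tmul_neg] using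
    tmul_apply_self_pos_of_mem_tensorSub hB₁.neg hB₂.neg (h₁.neg_swap hB₁).pos
      (h₂.neg_swap hB₂).pos hz hz₀

lemma finrank_sup_tensorSub (h₁ : IsDefiniteSplitting B₁ p₁ n₁)
    (h₂ : IsDefiniteSplitting B₂ p₂ n₂) (hB₁ : B₁.IsSymm) (hB₂ : B₂.IsSymm) :
    Module.finrank ℝ ↥(tensorSub p₁ p₂ ⊔ tensorSub n₁ n₂) =
      Module.finrank ℝ p₁ * Module.finrank ℝ p₂ + Module.finrank ℝ n₁ * Module.finrank ℝ n₂ := by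
  have hdisj : Disjoint (tensorSub p₁ p₂) (tensorSub n₁ n₂) :=
    disjoint_of_apply_self_pos (B := B₁.tmul B₂)
      (fun z hz => tmul_apply_self_pos_of_mem_tensorSub hB₁ hB₂ h₁.pos h₂.pos hz)
      (tmul_apply_eq_zero_of_mem_tensorSub (.inl h₁.orthogonal))
  rw [← finrank_tensorSub, ← finrank_tensorSub, ← Submodule.finrank_sup_add_finrank_inf_eq,
    hdisj.eq_bot, finrank_bot, add_zero]

lemma tmul (h₁ : IsDefiniteSplitting B₁ p₁ n₁) (h₂ : IsDefiniteSplitting B₂ p₂ n₂)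
    (hB₁ : B₁.IsSymm) (hB₂ : B₂.IsSymm) :
    IsDefiniteSplitting (B₁.tmul B₂) (tensorSub p₁ p₂ ⊔ tensorSub n₁ n₂)
      (tensorSub p₁ n₂ ⊔ tensorSub n₁ p₂) where
  orthogonal := apply_eq_zero_of_mem_sup_left
    (apply_eq_zero_of_mem_sup_right (tmul_apply_eq_zero_of_mem_tensorSub (.inr h₂.orthogonal))
      (tmul_apply_eq_zero_of_mem_tensorSub (.inl h₁.orthogonal)))
    (apply_eq_zero_of_mem_sup_right
      (tmul_apply_eq_zero_of_mem_tensorSub (.inl (h₁.orthogonal_symm hB₁)))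
      (tmul_apply_eq_zero_of_mem_tensorSub (.inr (h₂.orthogonal_symm hB₂))))
  pos := h₁.tmul_apply_self_pos h₂ hB₁ hB₂
  neg z hz hz₀ := by
    simpa only [BilinForm.tmul_neg, LinearMap.neg_apply, neg_pos] using
      h₁.tmul_apply_self_pos (h₂.neg_swap hB₂) hB₁ hB₂.neg z hz hz₀

end IsDefiniteSplitting

theorem tensor_split_decomposition_general {V W : Type*}
    [AddCommGroup V] [Module ℝ V] [AddCommGroup W] [Module ℝ W]
    [FiniteDimensional ℝ V] [FiniteDimensional ℝ W]
    (b' : LinearMap.BilinForm ℝ V) (b'' : LinearMap.BilinForm ℝ W)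
    (hs' : ∀ x y, b' x y = b' y x) (hs'' : ∀ x y, b'' x y = b'' y x)
    (P' N' : Submodule ℝ V) (P'' N'' : Submodule ℝ W)
    (horth' : ∀ x ∈ P', ∀ y ∈ N', b' x y = 0)
    (horth'' : ∀ x ∈ P'', ∀ y ∈ N'', b'' x y = 0)
    (hpos' : ∀ x ∈ P', x ≠ 0 → 0 < b' x x) (hneg' : ∀ x ∈ N', x ≠ 0 → b' x x < 0)
    (hpos'' : ∀ x ∈ P'', x ≠ 0 → 0 < b'' x x) (hneg'' : ∀ x ∈ N'', x ≠ 0 → b'' x x < 0)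
    (u v w : ℕ)
    (hdP' : Module.finrank ℝ P' = u) (hdN' : Module.finrank ℝ N' = u)
    (hdP'' : Module.finrank ℝ P'' = v) (hdN'' : Module.finrank ℝ N'' = w) :
    (∀ z ∈ tensorSub P' P'' ⊔ tensorSub N' N'', z ≠ 0 → 0 < (b'.tmul b'') z z) ∧
      (∀ z ∈ tensorSub P' N'' ⊔ tensorSub N' P'', z ≠ 0 → (b'.tmul b'') z z < 0) ∧
      (∀ z ∈ tensorSub P' P'' ⊔ tensorSub N' N'',
        ∀ z' ∈ tensorSub P' N'' ⊔ tensorSub N' P'', (b'.tmul b'') z z' = 0) ∧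
      Module.finrank ℝ ↥(tensorSub P' P'' ⊔ tensorSub N' N'') = u * (v + w) ∧
      Module.finrank ℝ ↥(tensorSub P' N'' ⊔ tensorSub N' P'') = u * (v + w) := by
  have h' : IsDefiniteSplitting b' P' N' := ⟨horth', hpos', hneg'⟩
  have h'' : IsDefiniteSplitting b'' P'' N'' := ⟨horth'', hpos'', hneg''⟩
  have hb' : b'.IsSymm := ⟨hs'⟩
  have hb'' : b''.IsSymm := ⟨hs''⟩
  have h := h'.tmul h'' hb' hb''
  refine ⟨h.pos, h.neg, h.orthogonal, ?_, ?_⟩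
  · rw [h'.finrank_sup_tensorSub h'' hb' hb'', hdP', hdN', hdP'', hdN'', Nat.mul_add]
  · rw [h'.finrank_sup_tensorSub (h''.neg_swap hb'') hb' hb''.neg, hdP', hdN', hdP'', hdN'',
      Nat.mul_add, Nat.add_comm]

/-- Let `b'` have signature `(u,u)` with orthogonal positive/negative definite parts
`P', N'` of dimension `u` each, and `b''` signature `(v,w)` with parts `P'', N''`.  Then in
`V' ⊗ V''` the subspace `(P'⊗P'') ⊕ (N'⊗N'')` is positive definite for `b'⊗b''`, the
subspace `(P'⊗N'') ⊕ (N'⊗P'')` is negative definite, the two are orthogonal, and both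
have dimension `u(v+w)`. -/
theorem tensor_split_decomposition {V W : Type*}
    [AddCommGroup V] [Module ℝ V] [AddCommGroup W] [Module ℝ W]
    [FiniteDimensional ℝ V] [FiniteDimensional ℝ W]
    (b' : LinearMap.BilinForm ℝ V) (b'' : LinearMap.BilinForm ℝ W)
    (hs' : ∀ x y, b' x y = b' y x) (hs'' : ∀ x y, b'' x y = b'' y x)
    (hn' : b'.Nondegenerate) (hn'' : b''.Nondegenerate)
    (P' N' : Submodule ℝ V) (P'' N'' : Submodule ℝ W)
    (hc' : IsCompl P' N') (hc'' : IsCompl P'' N'')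
    (horth' : ∀ x ∈ P', ∀ y ∈ N', b' x y = 0)
    (horth'' : ∀ x ∈ P'', ∀ y ∈ N'', b'' x y = 0)
    (hpos' : ∀ x ∈ P', x ≠ 0 → 0 < b' x x) (hneg' : ∀ x ∈ N', x ≠ 0 → b' x x < 0)
    (hpos'' : ∀ x ∈ P'', x ≠ 0 → 0 < b'' x x) (hneg'' : ∀ x ∈ N'', x ≠ 0 → b'' x x < 0)
    (u v w : ℕ)
    (hdP' : Module.finrank ℝ P' = u) (hdN' : Module.finrank ℝ N' = u)
    (hdP'' : Module.finrank ℝ P'' = v) (hdN'' : Module.finrank ℝ N'' = w) :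
    (∀ z ∈ tensorSub P' P'' ⊔ tensorSub N' N'', z ≠ 0 → 0 < (b'.tmul b'') z z) ∧
      (∀ z ∈ tensorSub P' N'' ⊔ tensorSub N' P'', z ≠ 0 → (b'.tmul b'') z z < 0) ∧
      (∀ z ∈ tensorSub P' P'' ⊔ tensorSub N' N'',
        ∀ z' ∈ tensorSub P' N'' ⊔ tensorSub N' P'', (b'.tmul b'') z z' = 0) ∧
      Module.finrank ℝ ↥(tensorSub P' P'' ⊔ tensorSub N' N'') = u * (v + w) ∧
      Module.finrank ℝ ↥(tensorSub P' N'' ⊔ tensorSub N' P'') = u * (v + w) :=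
  tensor_split_decomposition_general b' b'' hs' hs'' P' N' P'' N'' horth' horth'' hpos' hneg' hpos''
    hneg'' u v w hdP' hdN' hdP'' hdN''
end
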